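/- arXiv:1311.7228 — 2 statements merged into one kernel-verified Lean document; each statement's English description precedes it below -/
import Mathlib

section
/- Let k ≥ 0 and let f(x) ∈ ℚ(q)[x] be a polynomial of degree at most k. Then f([j]_q) ∈ ℤ[q] for all j = 0, 1, …, k if and only if, in the expansion f(x) = Σ_{j=0}^{k} c̃_j·q^{-j(j-1)/2}·(x choose j)_q, all coefficients c̃_j lie in ℤ[q]; moreover the coefficients are given by c̃_j = q^{j(j-1)/2}·(Δ_q^j f)(0). -/
open Polynomial Finset

/-- The indeterminate `q`, as an element of the field of rational functions `ℚ(q)`. -/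
noncomputable def qq : RatFunc ℚ := RatFunc.X

/-- The `q`-integer `[k]_q = (q^k - 1)/(q - 1)` in `ℚ(q)`. -/
noncomputable def qint (k : ℕ) : RatFunc ℚ := (qq ^ k - 1) / (qq - 1)

/-- The `q`-binomial polynomial `(x choose j)_q = x(x-[1]_q)⋯(x-[j-1]_q)/([1]_q⋯[j]_q)`
in `ℚ(q)[x]`. -/
noncomputable def qbinom (j : ℕ) : Polynomial (RatFunc ℚ) :=
  Polynomial.C (∏ i ∈ Finset.range j, qint (i + 1))⁻¹ *
    ∏ i ∈ Finset.range j, (Polynomial.X - Polynomial.C (qint i))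

/-- The Hahn operator `(Δ_q f)(x) = (f(1+qx) - f(x))/(1+(q-1)x)` on `ℚ(q)[x]`
(the division is exact; here `1+(q-1)x = (q-1)·(x - (1-q)⁻¹)` and we divide by the
monic factor and the scalar). -/
noncomputable def hahn (f : Polynomial (RatFunc ℚ)) : Polynomial (RatFunc ℚ) :=
  Polynomial.C (qq - 1)⁻¹ *
    ((f.comp (1 + Polynomial.C qq * Polynomial.X) - f) /ₘ
      (Polynomial.X - Polynomial.C (1 - qq)⁻¹))

lemma qq_ne_zero : qq ≠ 0 := RatFunc.X_ne_zero

lemma qq_pow_sub_one_ne {j : ℕ} (hj : j ≠ 0) : qq ^ j - 1 ≠ 0 := by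
  have : qq ^ j - 1 = algebraMap (Polynomial ℚ) (RatFunc ℚ) (X ^ j - 1) := by
    simp [qq, ← RatFunc.algebraMap_X, map_sub, map_pow]
  rw [this, ← map_zero (algebraMap (Polynomial ℚ) (RatFunc ℚ)),
    (RatFunc.algebraMap_injective ℚ).ne_iff]
  intro h
  have := congrArg (fun p => Polynomial.coeff p 0) h
  simp [Polynomial.coeff_X_pow, (Ne.symm hj)] at this

lemma qq_sub_one_ne : qq - 1 ≠ 0 := by simpa using qq_pow_sub_one_ne (j := 1) one_ne_zero

lemma one_sub_qq_ne : (1 : RatFunc ℚ) - qq ≠ 0 := by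
  intro h; apply qq_sub_one_ne; linear_combination -h

lemma qint_zero : qint 0 = 0 := by simp [qint]

lemma qint_ne_zero {j : ℕ} (hj : j ≠ 0) : qint j ≠ 0 :=
  div_ne_zero (qq_pow_sub_one_ne hj) qq_sub_one_ne

lemma qint_succ (i : ℕ) : qint (i + 1) = 1 + qq * qint i := by
  have h := qq_sub_one_ne
  rw [qint, qint]
  field_simp
  ring

lemma qint_succ' (j : ℕ) : qint (j + 1) = qq ^ j + qint j := by
  have h := qq_sub_one_ne
  rw [qint, qint]
  field_simp
  ring

lemma qint_mul_qq_sub_one (j : ℕ) : qint j * (qq - 1) = qq ^ j - 1 :=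
  div_mul_cancel₀ _ qq_sub_one_ne

lemma qbinom_zero : qbinom 0 = 1 := by simp [qbinom]

lemma den_ne (j : ℕ) : (∏ i ∈ Finset.range j, qint (i + 1)) ≠ 0 := by
  rw [Finset.prod_ne_zero_iff]
  exact fun i _ => qint_ne_zero (Nat.succ_ne_zero i)

lemma prod_comp_eq (j : ℕ) :
    (∏ i ∈ Finset.range (j + 1), (X - C (qint i))).comp (1 + C qq * X) =
      (1 + C qq * X) * (C (qq ^ j) * ∏ i ∈ Finset.range j, (X - C (qint i))) := by
  rw [Polynomial.prod_comp]
  simp only [sub_comp, X_comp, C_comp]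
  rw [Finset.prod_range_succ']
  have h1 : ∀ i : ℕ, (1 + C qq * X - C (qint (i + 1))) = C qq * (X - C (qint i)) := by
    intro i
    rw [qint_succ i, C_add, C_mul, C_1]
    ring
  rw [Finset.prod_congr rfl fun i _ => h1 i, Finset.prod_mul_distrib,
    Finset.prod_const, Finset.card_range, qint_zero, C_0, sub_zero, ← C_pow]
  ring

lemma comp_sub (j : ℕ) :
    (qbinom (j + 1)).comp (1 + C qq * X) - qbinom (j + 1) =
      (X - C (1 - qq)⁻¹) * (C (qq - 1) * qbinom j) := by
  have hF : qint (j + 1) ≠ 0 := qint_ne_zero (Nat.succ_ne_zero j)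
  have hC1 : C (qint (j+1)) * C (qq - 1) = C (qq ^ (j+1)) - (1 : Polynomial (RatFunc ℚ)) := by
    rw [← C_mul, qint_mul_qq_sub_one, C_sub, C_1]
  have hC2 : C (qint (j+1)) = C (qq ^ j) + (C (qint j) : Polynomial (RatFunc ℚ)) := by
    rw [← C_add, qint_succ']
  have hC3 : C qq * C (qq ^ j) = (C (qq ^ (j+1)) : Polynomial (RatFunc ℚ)) := by
    rw [← C_mul, ← pow_succ']
  have hbracket : (1 + C qq * X) * C (qq ^ j) - X + C (qint j) =
      C (qint (j+1)) * (C (qq - 1) * X + 1) := by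
    linear_combination (-X : Polynomial (RatFunc ℚ)) * hC1 - hC2 + X * hC3
  have hG : C (qq - 1) * (X - C (1 - qq)⁻¹) = C (qq - 1) * X + 1 := by
    have h : (qq - 1) * (1 - qq)⁻¹ = -1 := by
      rw [show qq - 1 = -(1 - qq) by ring, neg_mul, mul_inv_cancel₀ one_sub_qq_ne]
    rw [mul_sub, ← C_mul, h]
    simp
  have hD : C (∏ i ∈ Finset.range (j+1), qint (i + 1))⁻¹ * C (qint (j+1)) =
      (C (∏ i ∈ Finset.range j, qint (i + 1))⁻¹ : Polynomial (RatFunc ℚ)) := by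
    rw [← C_mul, Finset.prod_range_succ, mul_inv, mul_assoc,
      inv_mul_cancel₀ hF, mul_one]
  calc (qbinom (j + 1)).comp (1 + C qq * X) - qbinom (j + 1)
      = C (∏ i ∈ Finset.range (j+1), qint (i + 1))⁻¹ *
          ((∏ i ∈ Finset.range (j+1), (X - C (qint i))).comp (1 + C qq * X) -
            ∏ i ∈ Finset.range (j+1), (X - C (qint i))) := by
        rw [qbinom, mul_comp, C_comp]; ring
    _ = C (∏ i ∈ Finset.range (j+1), qint (i + 1))⁻¹ *
          ((∏ i ∈ Finset.range j, (X - C (qint i))) *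
            ((1 + C qq * X) * C (qq ^ j) - X + C (qint j))) := by
        rw [prod_comp_eq, Finset.prod_range_succ, Finset.prod_range_succ]; ring
    _ = (C (∏ i ∈ Finset.range (j+1), qint (i + 1))⁻¹ * C (qint (j+1))) *
          ((C (qq - 1) * X + 1) * ∏ i ∈ Finset.range j, (X - C (qint i))) := by
        rw [hbracket]; ring
    _ = (X - C (1 - qq)⁻¹) * (C (qq - 1) * qbinom j) := by
        rw [hD, qbinom, ← hG]; ring

lemma hahn_sum (a : ℕ → RatFunc ℚ) (n : ℕ) :
    hahn (∑ j ∈ Finset.range (n + 1), C (a j) * qbinom j) =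
      ∑ j ∈ Finset.range n, C (a (j + 1)) * qbinom j := by
  have hcomp : (∑ j ∈ Finset.range (n + 1), C (a j) * qbinom j).comp (1 + C qq * X) -
      (∑ j ∈ Finset.range (n + 1), C (a j) * qbinom j) =
      (X - C (1 - qq)⁻¹) *
        (C (qq - 1) * ∑ j ∈ Finset.range n, C (a (j + 1)) * qbinom j) := by
    rw [Polynomial.sum_comp, ← Finset.sum_sub_distrib]
    have hterm : ∀ j ∈ Finset.range (n + 1), (C (a j) * qbinom j).comp (1 + C qq * X) -
        C (a j) * qbinom j =
        C (a j) * ((qbinom j).comp (1 + C qq * X) - qbinom j) := by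
      intro j _
      rw [mul_comp, C_comp]; ring
    rw [Finset.sum_congr rfl hterm, Finset.sum_range_succ']
    have h0 : C (a 0) * ((qbinom 0).comp (1 + C qq * X) - qbinom 0) = 0 := by
      rw [qbinom_zero, one_comp]; ring
    rw [h0, add_zero, Finset.mul_sum, Finset.mul_sum]
    refine Finset.sum_congr rfl fun j _ => ?_
    rw [comp_sub j]
    ring
  rw [hahn, hcomp, mul_divByMonic_cancel_left _ (monic_X_sub_C _), ← mul_assoc,
    ← C_mul, inv_mul_cancel₀ qq_sub_one_ne, C_1, one_mul]

lemma hahn_iter (a : ℕ → RatFunc ℚ) (n : ℕ) :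
    ∀ i ≤ n, hahn^[i] (∑ j ∈ Finset.range (n + 1), C (a j) * qbinom j) =
      ∑ j ∈ Finset.range (n + 1 - i), C (a (j + i)) * qbinom j := by
  intro i
  induction i with
  | zero => intro _; simp
  | succ i ih =>
    intro hi
    have hi' : i ≤ n := Nat.le_of_succ_le hi
    rw [Function.iterate_succ_apply', ih hi']
    have hm : n + 1 - i = (n - i - 1) + 1 + 1 := by omega
    rw [hm, hahn_sum]
    have hm2 : n + 1 - (i + 1) = (n - i - 1) + 1 := by omega
    rw [hm2]
    refine Finset.sum_congr rfl fun j _ => ?_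
    have : j + 1 + i = j + (i + 1) := by omega
    rw [this]

lemma qbinom_eval_zero_succ (m : ℕ) : (qbinom (m + 1)).eval 0 = 0 := by
  rw [qbinom, eval_mul]
  apply mul_eq_zero_of_right
  rw [eval_prod]
  refine Finset.prod_eq_zero (Finset.mem_range.mpr (Nat.succ_pos m)) ?_
  simp [qint_zero]

noncomputable def G : ℕ → ℕ → Polynomial ℤ
  | _, 0 => 1
  | 0, _ + 1 => 0
  | m + 1, j + 1 => G m (j + 1) + X ^ (m - j) * G m j

lemma G_succ_succ (m j : ℕ) : G (m + 1) (j + 1) = G m (j + 1) + X ^ (m - j) * G m j := by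
  rfl

lemma G_zero_right (m : ℕ) : G m 0 = 1 := by cases m <;> rfl

lemma G_eq_zero : ∀ m j : ℕ, m < j → G m j = 0
  | _, 0, h => absurd h (Nat.not_lt_zero _)
  | 0, j + 1, _ => rfl
  | m + 1, j + 1, h => by
    rw [G_succ_succ, G_eq_zero m (j + 1) (by omega), G_eq_zero m j (by omega)]
    simp

lemma G_diag : ∀ m : ℕ, G m m = 1
  | 0 => rfl
  | m + 1 => by
    rw [G_succ_succ, G_eq_zero m (m + 1) (Nat.lt_succ_self m), G_diag m, Nat.sub_self]
    simp

lemma tri (j : ℕ) : (j + 1) * ((j + 1) - 1) / 2 = j * (j - 1) / 2 + j := by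
  cases j with
  | zero => rfl
  | succ n =>
    simp only [Nat.add_sub_cancel]
    rw [show (n + 1 + 1) * (n + 1) = (n + 1) * n + (n + 1) * 2 by ring,
      Nat.add_mul_div_right _ _ (by norm_num)]

lemma scalar_key (m : ℕ) : (qint m - (1 - qq)⁻¹) * (qq - 1) = qq ^ m := by
  rw [sub_mul, qint_mul_qq_sub_one]
  have h : (1 - qq)⁻¹ * (qq - 1) = -1 := by
    rw [show qq - 1 = -(1 - qq) by ring, mul_neg, inv_mul_cancel₀ one_sub_qq_ne]
  rw [h]
  ring

lemma eval_rec (m j : ℕ) :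
    (qbinom (j + 1)).eval (qint (m + 1)) =
      (qbinom (j + 1)).eval (qint m) + qq ^ m * (qbinom j).eval (qint m) := by
  have h := congrArg (Polynomial.eval (qint m)) (comp_sub j)
  rw [eval_sub, eval_comp] at h
  have hu : (1 + C qq * X).eval (qint m) = qint (m + 1) := by
    rw [qint_succ]; simp
  rw [hu] at h
  rw [eval_mul, eval_mul, eval_sub, eval_X, eval_C, eval_C] at h
  have h2 : (qint m - (1 - qq)⁻¹) * ((qq - 1) * (qbinom j).eval (qint m)) =
      qq ^ m * (qbinom j).eval (qint m) := by
    rw [← mul_assoc, scalar_key]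
  rw [h2] at h
  linear_combination h

lemma aeval_G_succ (m j : ℕ) :
    (Polynomial.aeval qq) (G (m + 1) (j + 1)) =
      (Polynomial.aeval qq) (G m (j + 1)) + qq ^ (m - j) * (Polynomial.aeval qq) (G m j) := by
  rw [G_succ_succ, map_add, map_mul, map_pow, Polynomial.aeval_X]

lemma eval_qbinom : ∀ m j : ℕ,
    (qbinom j).eval (qint m) = qq ^ (j * (j - 1) / 2) * (Polynomial.aeval qq) (G m j)
  | m, 0 => by
    rw [qbinom_zero, G_zero_right]
    simp
  | 0, j + 1 => by
    rw [qint_zero, qbinom_eval_zero_succ, G_eq_zero 0 (j + 1) (Nat.succ_pos j)]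
    simp
  | m + 1, j + 1 => by
    rw [eval_rec, eval_qbinom m (j + 1), eval_qbinom m j, aeval_G_succ, tri]
    by_cases hjm : j ≤ m
    · have hexp : qq ^ (j * (j - 1) / 2 + j) * (qq ^ (m - j) * (Polynomial.aeval qq) (G m j)) =
          qq ^ m * (qq ^ (j * (j - 1) / 2) * (Polynomial.aeval qq) (G m j)) := by
        rw [← mul_assoc, ← mul_assoc, ← pow_add, ← pow_add]
        congr 2
        omega
      rw [mul_add, hexp]
    · have h0 : G m j = 0 := G_eq_zero m j (by omega)
      rw [h0]
      simp

/-- A polynomial `f ∈ ℚ(q)[x]` of degree `≤ k` takes values in `ℤ[q]` at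
`x = 0, [1]_q, …, [k]_q` iff all coefficients `c̃_j` in the expansion
`f = Σ c̃_j q^{-j(j-1)/2} (x choose j)_q` lie in `ℤ[q]`; moreover
`c̃_j = q^{j(j-1)/2} (Δ_q^j f)(0)`. -/
theorem statement7 (k : ℕ) (f : Polynomial (RatFunc ℚ)) (hdeg : f.degree ≤ k)
    (c : ℕ → RatFunc ℚ)
    (hexp : f = ∑ j ∈ Finset.range (k + 1),
      Polynomial.C (c j * (qq ^ (j * (j - 1) / 2))⁻¹) * qbinom j) :
    ((∀ j ≤ k, ∃ g : Polynomial ℤ, f.eval (qint j) = Polynomial.aeval qq g) ↔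
      (∀ j ≤ k, ∃ g : Polynomial ℤ, c j = Polynomial.aeval qq g)) ∧
    (∀ j ≤ k, c j = qq ^ (j * (j - 1) / 2) * (hahn^[j] f).eval 0) := by
  have hEne : ∀ j : ℕ, (qq ^ (j * (j - 1) / 2)) ≠ 0 := fun j => pow_ne_zero _ qq_ne_zero
  set a : ℕ → RatFunc ℚ := fun j => c j * (qq ^ (j * (j - 1) / 2))⁻¹ with ha
  -- Part 2 : the coefficient formula
  have hpart2 : ∀ j ≤ k, (hahn^[j] f).eval 0 = a j := by
    intro j hj
    rw [hexp, hahn_iter a k j hj]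
    have hk1 : k + 1 - j = (k - j) + 1 := by omega
    rw [hk1, Finset.sum_range_succ', eval_add, eval_finset_sum]
    have hz : ∀ i ∈ Finset.range (k - j), (C (a (i + 1 + j)) * qbinom (i + 1)).eval 0 = 0 := by
      intro i _
      rw [eval_mul, qbinom_eval_zero_succ, mul_zero]
    rw [Finset.sum_congr rfl hz, Finset.sum_const_zero, zero_add, qbinom_zero]
    simp
  -- the value formula
  have hval : ∀ m : ℕ, f.eval (qint m) =
      ∑ j ∈ Finset.range (k + 1), c j * (Polynomial.aeval qq) (G m j) := by
    intro m
    rw [hexp, eval_finset_sum]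
    refine Finset.sum_congr rfl fun j _ => ?_
    rw [eval_mul, eval_C, eval_qbinom]
    calc a j * (qq ^ (j * (j - 1) / 2) * (Polynomial.aeval qq) (G m j))
        = c j * ((qq ^ (j * (j - 1) / 2))⁻¹ * qq ^ (j * (j - 1) / 2)) *
            (Polynomial.aeval qq) (G m j) := by rw [ha]; ring
      _ = c j * (Polynomial.aeval qq) (G m j) := by
          rw [inv_mul_cancel₀ (hEne j), mul_one]
  constructor
  · constructor
    · -- forward direction
      intro h
      have key : ∀ m, m ≤ k → c m ∈ (Polynomial.aeval (R := ℤ) qq).range := by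
        intro m
        induction m using Nat.strong_induction_on with
        | _ m ih =>
          intro hm
          have hmem : m ∈ Finset.range (k + 1) := Finset.mem_range.mpr (by omega)
          have hsum := hval m
          rw [← Finset.add_sum_erase _ _ hmem, G_diag, map_one, mul_one] at hsum
          have hc : c m = f.eval (qint m) -
              ∑ j ∈ (Finset.range (k + 1)).erase m, c j * (Polynomial.aeval qq) (G m j) := by
            linear_combination -hsum
          rw [hc]
          obtain ⟨g, hg⟩ := h m hm
          refine sub_mem ((AlgHom.mem_range _).mpr ⟨g, hg.symm⟩) (Subalgebra.sum_mem _ ?_)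
          intro j hjm
          obtain ⟨hjne, hjr⟩ := Finset.mem_erase.mp hjm
          have hjk : j ≤ k := by
            have := Finset.mem_range.mp hjr; omega
          rcases lt_or_gt_of_ne hjne with hlt | hgt
          · exact mul_mem (ih j hlt hjk) ((AlgHom.mem_range _).mpr ⟨G m j, rfl⟩)
          · rw [G_eq_zero m j hgt, map_zero, mul_zero]
            exact zero_mem _
      intro j hj
      obtain ⟨g, hg⟩ := (AlgHom.mem_range _).mp (key j hj)
      exact ⟨g, hg.symm⟩
    · -- backward direction
      intro h j hj
      have : f.eval (qint j) ∈ (Polynomial.aeval (R := ℤ) qq).range := by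
        rw [hval j]
        refine Subalgebra.sum_mem _ fun i hi => ?_
        have hik : i ≤ k := by
          have := Finset.mem_range.mp hi; omega
        obtain ⟨g, hg⟩ := h i hik
        exact mul_mem ((AlgHom.mem_range _).mpr ⟨g, hg.symm⟩)
          ((AlgHom.mem_range _).mpr ⟨G j i, rfl⟩)
      obtain ⟨g, hg⟩ := (AlgHom.mem_range _).mp this
      exact ⟨g, hg.symm⟩
  · -- part 2
    intro j hj
    rw [hpart2 j hj, ha]
    simp only []
    rw [mul_comm (c j) _, ← mul_assoc, mul_inv_cancel₀ (hEne j), one_mul]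
end

section
/- For all n ≥ 0, the following identity of polynomials in x over ℚ holds: (x+1)·(x+n+2)(x+n+3)⋯(x+2n)/n! = Σ_{j=0}^{n} ((2j+1)/(n+j+1))·binom(2n, n-j)·binom(x, j), where binom(x, j) = x(x-1)⋯(x-j+1)/j! is the generalized binomial coefficient polynomial; equivalently, ((x+1)/(x+n+1))·binom(x+2n, n) = Σ_{j=0}^{n} ((2j+1)/(n+j+1))·binom(2n, n-j)·binom(x, j). -/
open Polynomial Finset Nat

/-- The generalized binomial coefficient polynomial `binom(x, j) = x(x-1)⋯(x-j+1)/j!`. -/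
noncomputable def choosePoly (j : ℕ) : Polynomial ℚ :=
  Polynomial.C ((j ! : ℚ))⁻¹ * ∏ i ∈ Finset.range j, (Polynomial.X - Polynomial.C (i : ℚ))

lemma prodXsub (k : ℕ) :
    ∏ i ∈ Finset.range k, (Polynomial.X - Polynomial.C (i : ℚ)) = descPochhammer ℚ k := by
  induction k with
  | zero => simp [descPochhammer_zero]
  | succ k ih =>
      rw [Finset.prod_range_succ, ih, descPochhammer_succ_right]
      simp

lemma choosePoly_eval (j m : ℕ) :
    (choosePoly j).eval (m : ℚ) = (m.choose j : ℚ) := by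
  rw [choosePoly, prodXsub, eval_mul, eval_C,
    descPochhammer_eval_eq_descFactorial ℚ m j,
    Nat.descFactorial_eq_factorial_mul_choose]
  have : (j ! : ℚ) ≠ 0 := by exact_mod_cast j.factorial_ne_zero
  push_cast
  field_simp

lemma prod_eval (n m : ℕ) :
    ∏ i ∈ Finset.range n, ((m : ℚ) + ((n : ℚ) + 1 + (i : ℚ))) =
      (n ! : ℚ) * (((m + 2 * n).choose n : ℕ) : ℚ) := by
  have h1 : ∏ i ∈ Finset.range n, (m + n + 1 + i) = (m + 2 * n).descFactorial n := by
    rw [Nat.descFactorial_eq_prod_range, ← Finset.prod_range_reflect]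
    refine Finset.prod_congr rfl fun i hi => ?_
    simp only [Finset.mem_range] at hi
    omega
  have h2 : ∏ i ∈ Finset.range n, ((m : ℚ) + ((n : ℚ) + 1 + (i : ℚ))) =
      ((∏ i ∈ Finset.range n, (m + n + 1 + i) : ℕ) : ℚ) := by
    push_cast
    ring_nf
  rw [h2, h1, Nat.descFactorial_eq_factorial_mul_choose]
  push_cast
  ring

/-- The key numeric identity at `x = m`. -/
lemma key (n m : ℕ) :
    ((m : ℚ) + 1) * (((m + 2 * n).choose n : ℕ) : ℚ) =
      ((m : ℚ) + (n : ℚ) + 1) *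
        ∑ j ∈ Finset.range (n + 1),
          (2 * (j : ℚ) + 1) / ((n : ℚ) + j + 1) * (((2 * n).choose (n - j) : ℕ) : ℚ) *
            (m.choose j : ℚ) := by
  rcases Nat.eq_zero_or_pos n with rfl | hn
  · simp
  -- the shifted coefficient function
  set g : ℕ → ℚ := fun j => if j ≤ n then (((2 * n).choose (n - j) : ℕ) : ℚ) else 0 with hg
  have step1 : ∀ j ∈ Finset.range (n + 1),
      (2 * (j : ℚ) + 1) / ((n : ℚ) + j + 1) * (((2 * n).choose (n - j) : ℕ) : ℚ) *
        (m.choose j : ℚ) = (g j - g (j + 1)) * (m.choose j : ℚ) := by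
    intro j hj
    simp only [Finset.mem_range] at hj
    have hjn : j ≤ n := by omega
    congr 1
    have hne : ((n : ℚ) + j + 1) ≠ 0 := by positivity
    rcases eq_or_lt_of_le hjn with rfl | hlt
    · simp only [hg, le_refl, if_pos, Nat.sub_self, Nat.choose_zero_right,
        if_neg (by omega : ¬ (j + 1 ≤ j))]
      push_cast
      field_simp
      ring
    · have h := Nat.choose_succ_right_eq (2 * n) (n - j - 1)
      have e1 : n - j - 1 + 1 = n - j := by omega
      have e2 : 2 * n - (n - j - 1) = n + j + 1 := by omega
      rw [e1, e2] at h
      have hq : ((2 * n).choose (n - j) : ℚ) * ((n : ℚ) - j) =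
          ((2 * n).choose (n - j - 1) : ℚ) * ((n : ℚ) + j + 1) := by
        have := congrArg (fun t : ℕ => (t : ℚ)) h
        push_cast at this
        rw [Nat.cast_sub (le_of_lt hlt)] at this
        linarith [this]
      simp only [hg, if_pos hjn, if_pos (by omega : j + 1 ≤ n)]
      have e3 : n - (j + 1) = n - j - 1 := by omega
      rw [e3]
      field_simp
      linarith [hq]
  rw [Finset.sum_congr rfl step1]
  have expand : ∑ j ∈ Finset.range (n + 1), (g j - g (j + 1)) * (m.choose j : ℚ) =
      (∑ j ∈ Finset.range (n + 1), g j * (m.choose j : ℚ)) -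
        ∑ j ∈ Finset.range (n + 1), g (j + 1) * (m.choose j : ℚ) := by
    rw [← Finset.sum_sub_distrib]
    exact Finset.sum_congr rfl fun j _ => by ring
  rw [expand]
  -- Vandermonde for the first sum
  have v1 : ∑ j ∈ Finset.range (n + 1), g j * (m.choose j : ℚ) =
      (((m + 2 * n).choose n : ℕ) : ℚ) := by
    have v := Nat.add_choose_eq m (2 * n) n
    rw [Finset.Nat.sum_antidiagonal_eq_sum_range_succ_mk] at v
    have : ∑ j ∈ Finset.range (n + 1), g j * (m.choose j : ℚ) =
        ((∑ k ∈ Finset.range (n + 1), m.choose k * (2 * n).choose (n - k) : ℕ) : ℚ) := by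
      push_cast
      refine Finset.sum_congr rfl fun j hj => ?_
      simp only [Finset.mem_range] at hj
      rw [hg]
      simp only [if_pos (by omega : j ≤ n)]
      ring
    rw [this, ← v]
  -- Vandermonde for the second sum
  have v2 : ∑ j ∈ Finset.range (n + 1), g (j + 1) * (m.choose j : ℚ) =
      (((m + 2 * n).choose (n - 1) : ℕ) : ℚ) := by
    have v := Nat.add_choose_eq m (2 * n) (n - 1)
    rw [Finset.Nat.sum_antidiagonal_eq_sum_range_succ_mk] at v
    have en : (n - 1).succ = n := by omega
    rw [en] at v
    rw [Finset.sum_range_succ]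
    have hlast : g (n + 1) = 0 := by rw [hg]; simp only [if_neg (by omega : ¬ (n + 1 ≤ n))]
    rw [hlast, zero_mul, add_zero]
    have : ∑ j ∈ Finset.range n, g (j + 1) * (m.choose j : ℚ) =
        ((∑ k ∈ Finset.range n, m.choose k * (2 * n).choose (n - 1 - k) : ℕ) : ℚ) := by
      push_cast
      refine Finset.sum_congr rfl fun j hj => ?_
      simp only [Finset.mem_range] at hj
      rw [hg]
      simp only [if_pos (by omega : j + 1 ≤ n)]
      have : n - (j + 1) = n - 1 - j := by omega
      rw [this]
      ring
    rw [this, ← v]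
  rw [v1, v2]
  -- final step
  have h := Nat.choose_succ_right_eq (m + 2 * n) (n - 1)
  have e1 : n - 1 + 1 = n := by omega
  have e2 : m + 2 * n - (n - 1) = m + n + 1 := by omega
  rw [e1, e2] at h
  have hq : (((m + 2 * n).choose n : ℕ) : ℚ) * (n : ℚ) =
      (((m + 2 * n).choose (n - 1) : ℕ) : ℚ) * ((m : ℚ) + n + 1) := by
    exact_mod_cast congrArg (fun t : ℕ => (t : ℚ)) h
  linarith [hq]

/-- For all `n ≥ 0`:
`((x+1)/(x+n+1))·binom(x+2n, n) = Σ_{j=0}^{n} ((2j+1)/(n+j+1))·binom(2n, n-j)·binom(x, j)`,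
written with the denominator `x+n+1` cleared (note
`binom(x+2n, n) = (x+n+1)(x+n+2)⋯(x+2n)/n!`). -/
theorem statement16 (n : ℕ) :
    (Polynomial.X + 1) * (Polynomial.C ((n ! : ℚ))⁻¹ *
        ∏ i ∈ Finset.range n, (Polynomial.X + Polynomial.C ((n : ℚ) + 1 + i))) =
      (Polynomial.X + Polynomial.C ((n : ℚ) + 1)) *
        ∑ j ∈ Finset.range (n + 1),
          Polynomial.C ((2 * (j : ℚ) + 1) / ((n : ℚ) + j + 1) *
            ((2 * n).choose (n - j) : ℚ)) * choosePoly j := by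
  apply Polynomial.eq_of_infinite_eval_eq
  apply Set.Infinite.mono (s := Set.range ((↑) : ℕ → ℚ))
  · rintro _ ⟨m, rfl⟩
    show Polynomial.eval _ _ = Polynomial.eval _ _
    simp only [eval_mul, eval_add, eval_one, eval_C, eval_X, eval_prod, eval_finset_sum]
    rw [prod_eval n m]
    have hn : (n ! : ℚ) ≠ 0 := by exact_mod_cast n.factorial_ne_zero
    have : ((n ! : ℚ))⁻¹ * ((n ! : ℚ) * (((m + 2 * n).choose n : ℕ) : ℚ)) =
        (((m + 2 * n).choose n : ℕ) : ℚ) := by field_simp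
    rw [this]
    simp only [choosePoly_eval]
    have := key n m
    linarith [this]
  · exact Set.infinite_range_of_injective Nat.cast_injective
end
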